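/- arXiv:2106.03608 — 3 statements merged into one kernel-verified Lean document; each statement's English description precedes it below -/
import Mathlib

section
/- Let R be a complete local UFD with maximal ideal m and residue characteristic ≠ 2, K = Frac(R), V a 2-dimensional K-vector space, and ρ: G → Aut_K(V) satisfying: ρ irreducible, there exists a G-stable free R-lattice, tr ρ mod m = ψ + ψ' with ψ ≠ ψ'. Then for any G-stable free lattice T, the submodules T(ψ) = g_ψ T and T(ψ') = g_ψ' T (images of the idempotent-like projectors built from g₀) are free R-modules of rank one, and T = T(ψ) ⊕ T(ψ') as R[g₀]-modules. -/
open IsLocalRing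

/-- The projector `(f - b·id)/(a - b)` onto the `a`-eigenspace of `f`, for `a, b ∈ R`
viewed in `K`. -/
noncomputable def eigProj (R : Type*) {K V : Type*} [CommRing R] [Field K] [Algebra R K]
    [AddCommGroup V] [Module K V] (f : V →ₗ[K] V) (a b : R) : V →ₗ[K] V :=
  (algebraMap R K (a - b))⁻¹ • (f - algebraMap R K b • (LinearMap.id : V →ₗ[K] V))

/-!
Since `λψ ≢ λψ' (mod m)`, the difference `λψ - λψ'` is a unit of `R`, so the projectors `g_ψ`,
`g_ψ'` have coefficients in `R` and preserve every `ρ(g₀)`-stable lattice `T`. By Cayley–Hamilton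
they are complementary orthogonal idempotents, whence `T = g_ψ T ⊕ g_ψ' T`. Each summand of the
free module `T` is projective, hence free over the local ring `R`; it is nonzero because `T` spans
`V`, and it lies in an eigenline of `ρ(g₀)` (a line, because the trace `λψ + λψ'` prevents
`ρ(g₀)` from being scalar). As `R`-independent vectors stay `K`-independent, its rank is one.
-/

open Polynomial in
theorem LinearMap.charpoly_eq_of_finrank_eq_two {R M : Type*} [CommRing R] [Nontrivial R]
    [AddCommGroup M] [Module R M] [Module.Free R M] [Module.Finite R M]
    (hM : Module.finrank R M = 2) (f : Module.End R M) :
    f.charpoly = X ^ 2 - C (trace R M f) * X + C (LinearMap.det f) := by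
  let b := Module.finBasisOfFinrankEq R M hM
  rw [← f.charpoly_toMatrix b, Matrix.charpoly_fin_two, ← trace_eq_matrix_trace R b,
    LinearMap.det_toMatrix]

open Polynomial in
theorem LinearMap.sub_algebraMap_mul_sub_algebraMap_eq_zero {R M : Type*} [CommRing R]
    [Nontrivial R] [AddCommGroup M] [Module R M] [Module.Free R M] [Module.Finite R M]
    (hM : Module.finrank R M = 2) {f : Module.End R M} {α β : R}
    (htr : trace R M f = α + β) (hdet : LinearMap.det f = α * β) :
    (f - algebraMap R _ α) * (f - algebraMap R _ β) = 0 := by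
  have hchar : f.charpoly = (X - C α) * (X - C β) := by
    rw [f.charpoly_eq_of_finrank_eq_two hM, htr, hdet, C_add, C_mul]
    ring
  simpa [hchar] using f.aeval_self_charpoly

namespace Submodule

variable {R M : Type*} [Semiring R] [AddCommMonoid M] [Module R M] {p q : Module.End R M}
  {T : Submodule R M}

theorem map_sup_map_eq_of_add_eq_one (h : p + q = 1) (hp : T.map p ≤ T) (hq : T.map q ≤ T) :
    T.map p ⊔ T.map q = T := by
  refine le_antisymm (sup_le hp hq) fun t ht ↦ ?_
  have := add_mem_sup (mem_map_of_mem (f := p) ht) (mem_map_of_mem (f := q) ht)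
  rwa [← LinearMap.add_apply, h, Module.End.one_apply] at this

theorem map_inf_map_eq_bot_of_mul_eq_zero (hp : IsIdempotentElem p) (h : p * q = 0) :
    T.map p ⊓ T.map q = ⊥ := by
  refine eq_bot_iff.mpr ?_
  rintro _ ⟨⟨s, -, rfl⟩, ⟨t, -, hts⟩⟩
  have hs : p s = p (p s) := (congrArg (· s) hp).symm
  rw [mem_bot, hs, ← hts, ← Module.End.mul_apply, h, LinearMap.zero_apply]

theorem projective_map_of_isIdempotentElem [Module.Projective R T] (hp : IsIdempotentElem p)
    (hT : T.map p ≤ T) : Module.Projective R (T.map p) :=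
  Module.Projective.of_split (inclusion hT)
    ((p.domRestrict T).codRestrict _ fun t ↦ mem_map_of_mem t.2) <| by
      ext ⟨_, ⟨t, -, rfl⟩⟩
      exact congrArg (· t) hp

end Submodule

theorem Submodule.exists_eq_span_singleton_of_finrank_span_le_one {R K V : Type*} [CommRing R]
    [Field K] [Algebra R K] [IsFractionRing R K] [AddCommGroup V] [Module K V] [Module R V]
    [IsScalarTower R K V] (P : Submodule R V) [Module.Free R P] [Module.Finite R P]
    (hP : P ≠ ⊥) (hrank : Module.finrank K (span K (P : Set V)) ≤ 1) :
    ∃ v : V, v ≠ 0 ∧ P = span R {v} := by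
  let b := Module.Free.chooseBasis R P
  have hspan : P = span R (Set.range (P.subtype ∘ b)) := by
    rw [Set.range_comp, ← map_span, b.span_eq, map_subtype_top]
  have hli : LinearIndependent K (P.subtype ∘ b) :=
    (LinearIndependent.iff_fractionRing R K).mp (b.linearIndependent.map' _ P.ker_subtype)
  have hcard : Fintype.card (Module.Free.ChooseBasisIndex R P) ≤ 1 := by
    rwa [← finrank_span_eq_card hli, ← span_span_of_tower R, ← hspan]
  have : Nontrivial P := nontrivial_iff_ne_bot.mpr hP
  have : Subsingleton (Module.Free.ChooseBasisIndex R P) :=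
    Fintype.card_le_one_iff_subsingleton.mp hcard
  have : Unique (Module.Free.ChooseBasisIndex R P) := uniqueOfSubsingleton b.index_nonempty.some
  rw [Set.range_unique] at hspan
  exact ⟨_, fun h ↦ hP (by rwa [h, span_singleton_eq_bot.mpr rfl] at hspan), hspan⟩

theorem LinearMap.finrank_range_add_finrank_range_of_add_eq_one {K V : Type*} [DivisionRing K]
    [AddCommGroup V] [Module K V] [FiniteDimensional K V] {p q : Module.End K V}
    (h : p + q = 1) (hp : IsIdempotentElem p) (hpq : p * q = 0) :
    Module.finrank K (range p) + Module.finrank K (range q) = Module.finrank K V := by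
  have hsup := Submodule.map_sup_map_eq_of_add_eq_one (T := ⊤) h le_top le_top
  have hinf := Submodule.map_inf_map_eq_bot_of_mul_eq_zero (T := ⊤) hp hpq
  simp only [Submodule.map_top] at hsup hinf
  rw [← Submodule.finrank_sup_add_finrank_inf_eq, hsup, hinf, finrank_bot, add_zero, finrank_top]

theorem LinearMap.eq_zero_of_map_restrictScalars_eq_bot {R K V W : Type*} [CommRing R]
    [Field K] [Algebra R K] [AddCommGroup V] [Module K V] [Module R V] [IsScalarTower R K V]
    [AddCommGroup W] [Module K W] [Module R W] [IsScalarTower R K W] {T : Submodule R V}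
    (hT : Submodule.span K (T : Set V) = ⊤) {p : V →ₗ[K] W}
    (hp : T.map (p.restrictScalars R) = ⊥) : p = 0 := by
  rw [← range_eq_bot, ← Submodule.map_top, ← hT, Submodule.map_span]
  have : p '' T = (T.map (p.restrictScalars R) : Set W) := rfl
  rw [this, hp, Submodule.bot_coe, Submodule.span_zero_singleton]

theorem RingHom.map_ne_map_of_isUnit_sub {A B : Type*} [Ring A] [Ring B] [Nontrivial B]
    (φ : A →+* B) {a b : A} (h : IsUnit (a - b)) : φ a ≠ φ b :=
  sub_ne_zero.mp (map_sub φ a b ▸ (h.map φ).ne_zero)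

section eigProj

variable {R K V : Type*} [CommRing R] [Field K] [Algebra R K] [AddCommGroup V] [Module K V]
  {f : Module.End K V} {a b : R}

local notation "ι" => algebraMap R K

theorem eigProj_eq_smul (f : Module.End K V) (a b : R) :
    eigProj R f a b = (ι (a - b))⁻¹ • (f - algebraMap K _ (ι b)) := by
  rw [eigProj, Module.algebraMap_end_eq_smul_id]

theorem eigProj_add_eigProj (hab : ι a ≠ ι b) : eigProj R f a b + eigProj R f b a = 1 := by
  have : ι a - ι b ≠ 0 := sub_ne_zero.mpr hab
  have : ι b - ι a ≠ 0 := sub_ne_zero.mpr hab.symm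
  simp only [eigProj_eq_smul, map_sub, smul_sub, Module.algebraMap_end_eq_smul_id]
  match_scalars <;> field_simp <;> ring

theorem eigProj_mul_eigProj (hf : (f - algebraMap K _ (ι b)) * (f - algebraMap K _ (ι a)) = 0) :
    eigProj R f a b * eigProj R f b a = 0 := by
  rw [eigProj_eq_smul, eigProj_eq_smul, smul_mul_smul_comm, hf, smul_zero]

theorem isIdempotentElem_eigProj (hab : ι a ≠ ι b)
    (hf : (f - algebraMap K _ (ι b)) * (f - algebraMap K _ (ι a)) = 0) :
    IsIdempotentElem (eigProj R f a b) := by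
  rw [IsIdempotentElem, ← sub_eq_zero, ← mul_sub_one, ← eigProj_add_eigProj hab,
    sub_add_cancel_left, mul_neg, eigProj_mul_eigProj hf, neg_zero]

theorem commute_eigProj (f : Module.End K V) (a b : R) : Commute f (eigProj R f a b) := by
  rw [eigProj_eq_smul]
  exact ((Commute.refl f).sub_right (Algebra.commutes _ f).symm).smul_right _

theorem eigProj_ne_zero (hV : Module.finrank K V = 2) (htr : LinearMap.trace K V f = ι a + ι b)
    (hab : ι a ≠ ι b) : eigProj R f a b ≠ 0 := by
  have : FiniteDimensional K V := .of_finrank_pos (by omega)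
  intro hp
  have hf : f = algebraMap K _ (ι b) := by
    rw [eigProj_eq_smul, smul_eq_zero, inv_eq_zero, map_sub, sub_eq_zero, sub_eq_zero] at hp
    exact hp.resolve_left hab
  rw [hf, Algebra.algebraMap_eq_smul_one, map_smul, LinearMap.trace_one, hV, smul_eq_mul] at htr
  exact hab (by linear_combination -htr)

variable [Module R V] [IsScalarTower R K V] {T : Submodule R V}

theorem map_eigProj_le (hab : IsUnit (a - b)) (hT : ∀ v ∈ T, f v ∈ T) :
    T.map ((eigProj R f a b).restrictScalars R) ≤ T := by
  have hinv : (ι (a - b))⁻¹ = ι ↑hab.unit⁻¹ := by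
    rw [map_units_inv, hab.unit_spec]
  rintro _ ⟨t, ht, rfl⟩
  rw [LinearMap.restrictScalars_apply, eigProj_eq_smul, hinv, LinearMap.smul_apply,
    algebraMap_smul, LinearMap.sub_apply, Module.algebraMap_end_apply, algebraMap_smul]
  exact T.smul_mem _ (T.sub_mem (hT t ht) (T.smul_mem _ ht))

theorem apply_mem_map_eigProj {v : V}
    (hv : v ∈ T.map ((eigProj R f a b).restrictScalars R)) (hT : ∀ v ∈ T, f v ∈ T) :
    f v ∈ T.map ((eigProj R f a b).restrictScalars R) := by
  obtain ⟨t, ht, rfl⟩ := hv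
  exact ⟨f t, hT t ht, congrArg (· t) (commute_eigProj f a b).symm⟩

theorem map_eigProj_sup_map_eigProj (hab : IsUnit (a - b)) (hT : ∀ v ∈ T, f v ∈ T) :
    T.map ((eigProj R f a b).restrictScalars R) ⊔ T.map ((eigProj R f b a).restrictScalars R)
      = T :=
  Submodule.map_sup_map_eq_of_add_eq_one
    (congrArg (LinearMap.restrictScalars R)
      (eigProj_add_eigProj ((algebraMap R K).map_ne_map_of_isUnit_sub hab)))
    (map_eigProj_le hab hT) (map_eigProj_le (neg_sub a b ▸ hab.neg) hT)

theorem map_eigProj_inf_map_eigProj (hab : ι a ≠ ι b)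
    (hf : (f - algebraMap K _ (ι b)) * (f - algebraMap K _ (ι a)) = 0) :
    T.map ((eigProj R f a b).restrictScalars R) ⊓ T.map ((eigProj R f b a).restrictScalars R)
      = ⊥ :=
  Submodule.map_inf_map_eq_bot_of_mul_eq_zero
    (congrArg (LinearMap.restrictScalars R) (isIdempotentElem_eigProj hab hf))
    (congrArg (LinearMap.restrictScalars R) (eigProj_mul_eigProj hf))

theorem exists_map_eigProj_eq_span_singleton [IsLocalRing R] [IsFractionRing R K]
    (hV : Module.finrank K V = 2) (htr : LinearMap.trace K V f = ι a + ι b)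
    (hdet : LinearMap.det f = ι a * ι b) (hab : IsUnit (a - b)) (hTfg : T.FG)
    (hTspan : Submodule.span K (T : Set V) = ⊤) (hT : ∀ v ∈ T, f v ∈ T) [Module.Free R T] :
    ∃ v : V, v ≠ 0 ∧ T.map ((eigProj R f a b).restrictScalars R) = Submodule.span R {v} := by
  have : FiniteDimensional K V := .of_finrank_pos (by omega)
  have hab' := (algebraMap R K).map_ne_map_of_isUnit_sub hab
  have htr' : LinearMap.trace K V f = ι b + ι a := by rw [htr, add_comm]
  have hf : (f - algebraMap K _ (ι b)) * (f - algebraMap K _ (ι a)) = 0 :=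
    LinearMap.sub_algebraMap_mul_sub_algebraMap_eq_zero hV htr' (by rw [hdet, mul_comm])
  have hidem := isIdempotentElem_eigProj hab' hf
  set P := T.map ((eigProj R f a b).restrictScalars R)
  have : Module.Projective R P :=
    Submodule.projective_map_of_isIdempotentElem (congrArg (LinearMap.restrictScalars R) hidem)
      (map_eigProj_le hab hT)
  have : Module.Finite R P := Module.Finite.iff_fg.mpr (hTfg.map _)
  have : Module.Free R P := Module.free_of_flat_of_isLocalRing
  refine P.exists_eq_span_singleton_of_finrank_span_le_one (K := K) (fun hP ↦
    eigProj_ne_zero hV htr hab' (LinearMap.eq_zero_of_map_restrictScalars_eq_bot hTspan hP)) ?_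
  have hrange := LinearMap.finrank_range_add_finrank_range_of_add_eq_one
    (eigProj_add_eigProj hab') hidem (eigProj_mul_eigProj hf)
  have hq : 1 ≤ Module.finrank K (LinearMap.range (eigProj R f b a)) :=
    Submodule.one_le_finrank_iff.mpr <|
      LinearMap.range_eq_bot.not.mpr (eigProj_ne_zero hV htr' hab'.symm)
  calc Module.finrank K (Submodule.span K (P : Set V))
      ≤ Module.finrank K (LinearMap.range (eigProj R f a b)) := by
        refine Submodule.finrank_mono (Submodule.span_le.mpr ?_)
        rintro _ ⟨t, -, rfl⟩
        exact LinearMap.mem_range_self _ t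
    _ ≤ 1 := by omega

end eigProj

theorem eigcomponents_free_rank_one_general
    {R K V G : Type*} [CommRing R] [IsLocalRing R]
    [Field K] [Algebra R K] [IsFractionRing R K]
    [AddCommGroup V] [Module K V] [Module R V] [IsScalarTower R K V] [Group G]
    (hdim : Module.finrank K V = 2)
    (ρ : Representation K G V)
    (tr : G → R) (htr : ∀ g, algebraMap R K (tr g) = LinearMap.trace K V (ρ g))
    (ψ ψ' : G →* (R ⧸ maximalIdeal R)ˣ)
    (g₀ : G) (hg₀ : ψ g₀ ≠ ψ' g₀)
    (lamψ lamψ' : R)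
    (hsum : lamψ + lamψ' = tr g₀)
    (hprod : algebraMap R K (lamψ * lamψ') = LinearMap.det (ρ g₀))
    (hlift : Ideal.Quotient.mk (maximalIdeal R) lamψ = (ψ g₀ : R ⧸ maximalIdeal R))
    (hlift' : Ideal.Quotient.mk (maximalIdeal R) lamψ' = (ψ' g₀ : R ⧸ maximalIdeal R)) :
    ∀ T : Submodule R V,
      T.FG → Submodule.span K (T : Set V) = ⊤ → (∀ g : G, ∀ v ∈ T, ρ g v ∈ T) →
      Module.Free R T →
      (∃ v : V, v ≠ 0 ∧
        Submodule.map ((eigProj R (ρ g₀) lamψ lamψ').restrictScalars R) T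
          = Submodule.span R {v}) ∧
      (∃ v : V, v ≠ 0 ∧
        Submodule.map ((eigProj R (ρ g₀) lamψ' lamψ).restrictScalars R) T
          = Submodule.span R {v}) ∧
      (∀ v ∈ Submodule.map ((eigProj R (ρ g₀) lamψ lamψ').restrictScalars R) T,
        ρ g₀ v ∈ Submodule.map ((eigProj R (ρ g₀) lamψ lamψ').restrictScalars R) T) ∧
      (∀ v ∈ Submodule.map ((eigProj R (ρ g₀) lamψ' lamψ).restrictScalars R) T,
        ρ g₀ v ∈ Submodule.map ((eigProj R (ρ g₀) lamψ' lamψ).restrictScalars R) T) ∧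
      Submodule.map ((eigProj R (ρ g₀) lamψ lamψ').restrictScalars R) T
        ⊓ Submodule.map ((eigProj R (ρ g₀) lamψ' lamψ).restrictScalars R) T = ⊥ ∧
      Submodule.map ((eigProj R (ρ g₀) lamψ lamψ').restrictScalars R) T
        ⊔ Submodule.map ((eigProj R (ρ g₀) lamψ' lamψ).restrictScalars R) T = T := by
  intro T hTfg hTspan hTstab _
  have : FiniteDimensional K V := .of_finrank_pos (by omega)
  have hunit : IsUnit (lamψ - lamψ') := IsLocalRing.notMem_maximalIdeal.mp fun h ↦
    hg₀ <| Units.ext <| hlift.symm.trans <| (Ideal.Quotient.eq.mpr h).trans hlift'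
  have hunit' : IsUnit (lamψ' - lamψ) := neg_sub lamψ lamψ' ▸ hunit.neg
  have htr₀ : LinearMap.trace K V (ρ g₀) = algebraMap R K lamψ + algebraMap R K lamψ' := by
    rw [← htr, ← hsum, map_add]
  have htr₀' : LinearMap.trace K V (ρ g₀) = algebraMap R K lamψ' + algebraMap R K lamψ := by
    rw [htr₀, add_comm]
  have hdet₀ : LinearMap.det (ρ g₀) = algebraMap R K lamψ * algebraMap R K lamψ' := by
    rw [← hprod, map_mul]
  have hdet₀' : LinearMap.det (ρ g₀) = algebraMap R K lamψ' * algebraMap R K lamψ := by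
    rw [hdet₀, mul_comm]
  have hT := hTstab g₀
  exact ⟨exists_map_eigProj_eq_span_singleton hdim htr₀ hdet₀ hunit hTfg hTspan hT,
    exists_map_eigProj_eq_span_singleton hdim htr₀' hdet₀' hunit' hTfg hTspan hT,
    fun v hv ↦ apply_mem_map_eigProj hv hT, fun v hv ↦ apply_mem_map_eigProj hv hT,
    map_eigProj_inf_map_eigProj ((algebraMap R K).map_ne_map_of_isUnit_sub hunit)
      (LinearMap.sub_algebraMap_mul_sub_algebraMap_eq_zero hdim htr₀' hdet₀'),
    map_eigProj_sup_map_eigProj hunit hT⟩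

/-- Let `R` be a complete local UFD of residue characteristic `≠ 2`, and
`ρ` a two-dimensional irreducible representation over `K = Frac R` with a stable free
lattice, whose trace mod `m` is the sum of two distinct characters `ψ ≠ ψ'`. Choose
`g₀ ∈ G` with `ψ g₀ ≠ ψ' g₀` and (by Hensel) roots `λψ, λψ' ∈ R` of the characteristic
polynomial of `ρ g₀` lifting `ψ g₀, ψ' g₀`. Then for any `G`-stable free lattice `T`, the
components `T(ψ) = g_ψ T` and `T(ψ') = g_ψ' T` are free `R`-modules of rank one (spans of
a single nonzero vector), stable under `ρ g₀`, and `T = T(ψ) ⊕ T(ψ')` internally. -/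
theorem eigcomponents_free_rank_one
    {R K V G : Type*} [CommRing R] [IsDomain R] [IsLocalRing R]
    [UniqueFactorizationMonoid R] [IsAdicComplete (maximalIdeal R) R]
    [Field K] [Algebra R K] [IsFractionRing R K]
    [AddCommGroup V] [Module K V] [Module R V] [IsScalarTower R K V] [Group G]
    (hchar : ringChar (R ⧸ maximalIdeal R) ≠ 2)
    (hdim : Module.finrank K V = 2)
    (ρ : Representation K G V)
    (hirr : ∀ W : Submodule K V, (∀ g : G, ∀ v ∈ W, ρ g v ∈ W) → W = ⊥ ∨ W = ⊤)
    (T₀ : Submodule R V) (hT₀fg : T₀.FG) (hT₀span : Submodule.span K (T₀ : Set V) = ⊤)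
    (hT₀stab : ∀ g : G, ∀ v ∈ T₀, ρ g v ∈ T₀) (hT₀free : Module.Free R T₀)
    (tr : G → R) (htr : ∀ g, algebraMap R K (tr g) = LinearMap.trace K V (ρ g))
    (ψ ψ' : G →* (R ⧸ maximalIdeal R)ˣ) (hdist : ψ ≠ ψ')
    (hred : ∀ g, Ideal.Quotient.mk (maximalIdeal R) (tr g)
      = (ψ g : R ⧸ maximalIdeal R) + (ψ' g : R ⧸ maximalIdeal R))
    (g₀ : G) (hg₀ : ψ g₀ ≠ ψ' g₀)
    (lamψ lamψ' : R)
    (hsum : lamψ + lamψ' = tr g₀)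
    (hprod : algebraMap R K (lamψ * lamψ') = LinearMap.det (ρ g₀))
    (hlift : Ideal.Quotient.mk (maximalIdeal R) lamψ = (ψ g₀ : R ⧸ maximalIdeal R))
    (hlift' : Ideal.Quotient.mk (maximalIdeal R) lamψ' = (ψ' g₀ : R ⧸ maximalIdeal R)) :
    ∀ T : Submodule R V,
      T.FG → Submodule.span K (T : Set V) = ⊤ → (∀ g : G, ∀ v ∈ T, ρ g v ∈ T) →
      Module.Free R T →
      (∃ v : V, v ≠ 0 ∧
        Submodule.map ((eigProj R (ρ g₀) lamψ lamψ').restrictScalars R) T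
          = Submodule.span R {v}) ∧
      (∃ v : V, v ≠ 0 ∧
        Submodule.map ((eigProj R (ρ g₀) lamψ' lamψ).restrictScalars R) T
          = Submodule.span R {v}) ∧
      (∀ v ∈ Submodule.map ((eigProj R (ρ g₀) lamψ lamψ').restrictScalars R) T,
        ρ g₀ v ∈ Submodule.map ((eigProj R (ρ g₀) lamψ lamψ').restrictScalars R) T) ∧
      (∀ v ∈ Submodule.map ((eigProj R (ρ g₀) lamψ' lamψ).restrictScalars R) T,
        ρ g₀ v ∈ Submodule.map ((eigProj R (ρ g₀) lamψ' lamψ).restrictScalars R) T) ∧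
      Submodule.map ((eigProj R (ρ g₀) lamψ lamψ').restrictScalars R) T
        ⊓ Submodule.map ((eigProj R (ρ g₀) lamψ' lamψ).restrictScalars R) T = ⊥ ∧
      Submodule.map ((eigProj R (ρ g₀) lamψ lamψ').restrictScalars R) T
        ⊔ Submodule.map ((eigProj R (ρ g₀) lamψ' lamψ).restrictScalars R) T = T :=
  eigcomponents_free_rank_one_general hdim ρ tr htr ψ ψ' g₀ hg₀ lamψ lamψ' hsum hprod hlift hlift'
end

section
/- Let R be a local ring with maximal ideal m, and T a free R-module of rank 2 with a decomposition T = T₁ ⊕ T₂ into nonzero R-submodules that are torsion-free, such that an endomorphism g₀ of T acts on T₁ and T₂ through scalars that are distinct modulo m. Then T₁ and T₂ are each free of rank one over R. -/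
open IsLocalRing

/-!
Complementary submodules of a finite free module over a local ring are direct summands, hence
finite projective, hence free by Nakayama's lemma. Nonzero free summands have positive rank,
and the ranks of `T₁` and `T₂` add up to `2`, so both are `1`.
-/

namespace Submodule

section Ring

variable {R M : Type*} [Ring R] [AddCommGroup M] [Module R M] {p q : Submodule R M}

theorem projective_of_isCompl [Module.Projective R M] (h : IsCompl p q) :
    Module.Projective R p :=
  .of_split p.subtype (p.projectionOnto q h) (projectionOnto_comp_subtype h)

theorem finite_of_isCompl [Module.Finite R M] (h : IsCompl p q) : Module.Finite R p :=
  .of_surjective _ (projectionOnto_surjective h)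

theorem finrank_add_finrank_of_isCompl [StrongRankCondition R] [Module.Free R p]
    [Module.Free R q] [Module.Finite R p] [Module.Finite R q] (h : IsCompl p q) :
    Module.finrank R p + Module.finrank R q = Module.finrank R M := by
  rw [← Module.finrank_prod, (prodEquivOfIsCompl p q h).finrank_eq]

end Ring

theorem free_of_isCompl {R M : Type*} [CommRing R] [IsLocalRing R] [AddCommGroup M]
    [Module R M] [Module.Free R M] [Module.Finite R M] {p q : Submodule R M}
    (h : IsCompl p q) : Module.Free R p :=
  have := projective_of_isCompl h
  have := finite_of_isCompl h
  Module.free_of_flat_of_isLocalRing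

end Submodule

theorem summands_free_rank_one_general
    {R T : Type*} [CommRing R] [IsLocalRing R] [AddCommGroup T] [Module R T]
    [Module.Free R T] (hrk : Module.rank R T = 2)
    (T₁ T₂ : Submodule R T)
    (h₁ne : T₁ ≠ ⊥) (h₂ne : T₂ ≠ ⊥)
    (hinf : T₁ ⊓ T₂ = ⊥) (hsup : T₁ ⊔ T₂ = ⊤) :
    Nonempty (T₁ ≃ₗ[R] R) ∧ Nonempty (T₂ ≃ₗ[R] R) := by
  have hfinrank : Module.finrank R T = 2 := Module.finrank_eq_of_rank_eq (by exact_mod_cast hrk)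
  have : Module.Finite R T := Module.finite_of_finrank_eq_succ hfinrank
  have hcompl : IsCompl T₁ T₂ := ⟨disjoint_iff.mpr hinf, codisjoint_iff.mpr hsup⟩
  have := Submodule.free_of_isCompl hcompl
  have := Submodule.free_of_isCompl hcompl.symm
  have := Submodule.finite_of_isCompl hcompl
  have := Submodule.finite_of_isCompl hcompl.symm
  have hsum := Submodule.finrank_add_finrank_of_isCompl hcompl
  have hpos₁ : 0 < Module.finrank R T₁ :=
    (Module.finrank_pos_iff_of_free R T₁).mpr (Submodule.nontrivial_iff_ne_bot.mpr h₁ne)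
  have hpos₂ : 0 < Module.finrank R T₂ :=
    (Module.finrank_pos_iff_of_free R T₂).mpr (Submodule.nontrivial_iff_ne_bot.mpr h₂ne)
  exact ⟨(Module.nonempty_linearEquiv_of_finrank_eq_one (by omega)).map LinearEquiv.symm,
    (Module.nonempty_linearEquiv_of_finrank_eq_one (by omega)).map LinearEquiv.symm⟩

/-- Let `R` be a local ring and `T` a free `R`-module of rank `2` with
an internal decomposition `T = T₁ ⊕ T₂` into nonzero torsion-free submodules, such that an
endomorphism `g₀` of `T` acts on `T₁` and `T₂` through scalars `c₁, c₂` that are distinct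
modulo the maximal ideal. Then `T₁` and `T₂` are each free of rank one over `R`. -/
theorem summands_free_rank_one
    {R T : Type*} [CommRing R] [IsLocalRing R] [AddCommGroup T] [Module R T]
    [Module.Free R T] (hrk : Module.rank R T = 2)
    (T₁ T₂ : Submodule R T)
    (h₁ne : T₁ ≠ ⊥) (h₂ne : T₂ ≠ ⊥)
    (h₁tf : ∀ (c : R) (x : T), x ∈ T₁ → c • x = 0 → c = 0 ∨ x = 0)
    (h₂tf : ∀ (c : R) (x : T), x ∈ T₂ → c • x = 0 → c = 0 ∨ x = 0)
    (hinf : T₁ ⊓ T₂ = ⊥) (hsup : T₁ ⊔ T₂ = ⊤)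
    (g₀ : T →ₗ[R] T) (c₁ c₂ : R)
    (hg₁ : ∀ x ∈ T₁, g₀ x = c₁ • x) (hg₂ : ∀ x ∈ T₂, g₀ x = c₂ • x)
    (hc : Ideal.Quotient.mk (maximalIdeal R) c₁ ≠ Ideal.Quotient.mk (maximalIdeal R) c₂) :
    Nonempty (T₁ ≃ₗ[R] R) ∧ Nonempty (T₂ ≃ₗ[R] R) :=
  summands_free_rank_one_general hrk T₁ T₂ h₁ne h₂ne hinf hsup
end

section
/- Let R be a complete local UFD of residue characteristic ≠ 2, ρ a 2-dimensional irreducible residually disjoint reducible representation of G with a stable free lattice, and N the set of height-one primes where the reducibility ideal J is locally proper. If N is empty, then all G-stable lattices of V are homothetic; i.e., the set of homothety classes of stable reflexive lattices is a singleton. -/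
/-!
Fix `g₀` with `ψ g₀ ≠ ψ' g₀`. Hensel's lemma lifts the distinct residual eigenvalues of `ρ g₀` to
eigenvalues `α, β ∈ R` with `α - β` a unit, so the eigenprojections `(ρ g₀ - β) / (α - β)` and
`(α - ρ g₀) / (α - β)` preserve every stable lattice. A stable reflexive lattice is therefore the
sum of its two projections, each a reflexive rank-one lattice and hence principal because `R` is a
UFD: it is `R x e₀ ⊕ R y e₁` for a fixed eigenbasis `(e₀, e₁)`. For a second one,
`R x' e₀ ⊕ R y' e₁`, put `r = (x' / x) / (y' / y)`. If `r` and `r⁻¹` lie in `R`, the lattices are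
homothetic. Otherwise stability of both lattices forces a prime `p` to divide one off-diagonal
coefficient of `ρ g` in the basis `(x e₀, y e₁)` for every `g`; modulo `p` the trace is then a sum
of two characters, so `J ⊆ (p)`, a height-one prime.
-/

open IsLocalRing

/-- A prime ideal of height one. -/
def IsHeightOnePrime {R : Type*} [CommRing R] (p : Ideal R) : Prop :=
  p.IsPrime ∧ p ≠ ⊥ ∧ ∀ q : Ideal R, q.IsPrime → q < p → q = ⊥

/-- Scaling of an `R`-lattice by `x : K`. -/
noncomputable def latSmul (R K : Type*) {V : Type*} [CommRing R] [Field K] [Algebra R K]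
    [AddCommGroup V] [Module K V] [Module R V] [IsScalarTower R K V]
    (x : K) (T : Submodule R V) : Submodule R V :=
  Submodule.map ((LinearMap.lsmul K V x).restrictScalars R) T

/-- Homothety of lattices. -/
def Homothetic (R K : Type*) {V : Type*} [CommRing R] [Field K] [Algebra R K]
    [AddCommGroup V] [Module K V] [Module R V] [IsScalarTower R K V]
    (T T' : Submodule R V) : Prop :=
  ∃ x : K, x ≠ 0 ∧ latSmul R K x T = T'

open IsLocalization

theorem Module.bijective_of_bijective_dualMap {R M N : Type*} [CommSemiring R]
    [AddCommMonoid M] [Module R M] [AddCommMonoid N] [Module R N] [Module.IsReflexive R M]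
    [Module.IsReflexive R N] {i : M →ₗ[R] N} (h : Function.Bijective i.dualMap) :
    Function.Bijective i := by
  have hcomm : ⇑(Module.Dual.eval R N) ∘ i =
      ⇑(LinearEquiv.ofBijective _ h).dualMap ∘ Module.Dual.eval R M := rfl
  refine ((Module.bijective_dual_eval R N).of_comp_iff' i).mp ?_
  rw [hcomm]
  exact (LinearEquiv.bijective _).comp (Module.bijective_dual_eval R M)

theorem Submodule.span_range_eq_of_forall_exists_unit_smul {R M ι : Type*} [Semiring R]
    [AddCommMonoid M] [Module R M] {v v' : ι → M} (h : ∀ i, ∃ u : Rˣ, v i = u • v' i) :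
    Submodule.span R (Set.range v) = Submodule.span R (Set.range v') := by
  choose u hu using h
  refine le_antisymm (Submodule.span_le.mpr (Set.range_subset_iff.mpr fun i => ?_))
    (Submodule.span_le.mpr (Set.range_subset_iff.mpr fun i => ?_))
  · rw [hu i]
    exact Submodule.smul_of_tower_mem _ _ (Submodule.subset_span ⟨i, rfl⟩)
  · rw [← inv_smul_smul (u i) (v' i), ← hu i]
    exact Submodule.smul_of_tower_mem _ _ (Submodule.subset_span ⟨i, rfl⟩)

section FractionField

variable {R K : Type*} [CommRing R] [Field K] [Algebra R K] [IsFractionRing R K]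

theorem IsFractionRing.exists_unit_eq_of_isInteger {x : K} (hx0 : x ≠ 0) (hx : IsInteger R x)
    (hx' : IsInteger R x⁻¹) : ∃ u : Rˣ, algebraMap R K u = x := by
  obtain ⟨r, rfl⟩ := hx
  obtain ⟨r', hr'⟩ := hx'
  have h : r * r' = 1 :=
    IsFractionRing.injective R K (by rw [map_mul, hr', mul_inv_cancel₀ hx0, map_one])
  exact ⟨Units.mkOfMulEqOne r r' h, rfl⟩

variable [IsDomain R]

theorem IsFractionRing.exists_prime_dvd_of_not_isInteger [UniqueFactorizationMonoid R] {x : K}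
    (hx : ¬ IsInteger R x) :
    ∃ p : R, Prime p ∧ ∀ c : R, IsInteger R (x * algebraMap R K c) → p ∣ c := by
  have hden : ¬ IsUnit (den R x : R) := fun h => hx (isInteger_of_isUnit_den h)
  obtain ⟨p, hpirr, hpd⟩ :=
    WfDvdMonoid.exists_irreducible_factor hden (nonZeroDivisors.ne_zero (den R x).2)
  have hp := UniqueFactorizationMonoid.irreducible_iff_prime.mp hpirr
  refine ⟨p, hp, fun c ⟨y, hy⟩ => ?_⟩
  have hnum : (den R x : R) * y = num R x * c := by
    refine IsFractionRing.injective R K ?_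
    have hdenK : algebraMap R K (den R x) ≠ 0 :=
      IsFractionRing.to_map_ne_zero_of_mem_nonZeroDivisors (den R x).2
    rw [map_mul, map_mul, hy, (div_eq_iff hdenK).mp (mk'_num_den' R x)]
    ring
  have hpnum : ¬ p ∣ num R x := fun h => hp.not_isUnit (num_den_reduced R x h hpd)
  exact (hp.dvd_or_dvd (hnum ▸ dvd_mul_of_dvd_left hpd y)).resolve_left hpnum

theorem Submodule.exists_algebraMap_eq_mul_of_dual (I : Submodule R K) (φ : Module.Dual R I) :
    ∃ x : K, ∀ a : I, algebraMap R K (φ a) = x * a := by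
  by_cases hI : I = ⊥
  · subst hI
    refine ⟨0, fun a => ?_⟩
    simp [Subsingleton.elim a 0]
  obtain ⟨k, hkI, hk⟩ := Submodule.exists_mem_ne_zero_of_ne_bot hI
  refine ⟨algebraMap R K (φ ⟨k, hkI⟩) / k, fun a => ?_⟩
  obtain ⟨r, t, ht, hrt⟩ := IsFractionRing.div_surjective (A := R) ((a : K) / k)
  have htK : algebraMap R K t ≠ 0 := IsFractionRing.to_map_ne_zero_of_mem_nonZeroDivisors ht
  rw [div_eq_div_iff htK hk] at hrt
  have hsmul : t • a = r • (⟨k, hkI⟩ : I) := by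
    ext
    simp only [SetLike.val_smul, Algebra.smul_def]
    linear_combination -hrt
  have hφ := congrArg (fun y => algebraMap R K (φ y)) hsmul
  simp only [map_smul, smul_eq_mul, map_mul] at hφ
  rw [div_mul_eq_mul_div, eq_div_iff hk]
  refine mul_left_cancel₀ htK ?_
  linear_combination k * hφ + algebraMap R K (φ ⟨k, hkI⟩) * hrt

/-- `c` is a gcd of the elements of `I`. -/
theorem Submodule.exists_le_span_singleton_isInteger_mul [NormalizedGCDMonoid R]
    (I : Submodule R K) (hfg : I.FG) (hI : I ≠ ⊥) :
    ∃ c : K, c ≠ 0 ∧ I ≤ R ∙ c ∧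
      ∀ x : K, (∀ a ∈ I, IsInteger R (x * a)) → IsInteger R (x * c) := by
  classical
  obtain ⟨S, rfl⟩ := hfg
  obtain ⟨b, hb⟩ := exist_integer_multiples_of_finset (nonZeroDivisors R) S
  choose! N hN using hb
  have hbK : algebraMap R K b ≠ 0 :=
    IsFractionRing.to_map_ne_zero_of_mem_nonZeroDivisors b.2
  have hNa : ∀ a ∈ S, a = algebraMap R K (N a) / algebraMap R K b := fun a ha => by
    rw [hN a ha, Algebra.smul_def, mul_div_cancel_left₀ _ hbK]
  set g := S.gcd N
  have hg : g ≠ 0 := by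
    obtain ⟨a, ha, ha0⟩ : ∃ a ∈ S, a ≠ 0 := by
      by_contra! h
      exact hI (Submodule.span_eq_bot.mpr fun a ha => h a ha)
    intro hg
    refine ha0 ?_
    rw [hNa a ha, Finset.gcd_eq_zero_iff.mp hg a ha, map_zero, zero_div]
  refine ⟨algebraMap R K g / algebraMap R K b,
    div_ne_zero ((map_ne_zero_iff _ (IsFractionRing.injective R K)).mpr hg) hbK, ?_, ?_⟩
  · refine Submodule.span_le.mpr fun a ha => Submodule.mem_span_singleton.mpr ?_
    obtain ⟨q, hq⟩ := Finset.gcd_dvd (f := N) ha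
    refine ⟨q, ?_⟩
    rw [hNa a ha, hq, map_mul, Algebra.smul_def]
    ring
  · intro x hx
    obtain ⟨n, m, hm, rfl⟩ := IsFractionRing.div_surjective (A := R) x
    have hmK : algebraMap R K m ≠ 0 := IsFractionRing.to_map_ne_zero_of_mem_nonZeroDivisors hm
    have hdvd : m * b ∣ n * g := by
      refine (Finset.gcd_mul_left' S N n).dvd_iff_dvd_right.mp (Finset.dvd_gcd fun a ha => ?_)
      obtain ⟨y, hy⟩ := hx a (Submodule.subset_span ha)
      refine ⟨y, IsFractionRing.injective R K ?_⟩
      rw [map_mul, map_mul, map_mul, hy, hN a ha, Algebra.smul_def]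
      field_simp
    obtain ⟨z, hz⟩ := hdvd
    refine ⟨z, ?_⟩
    have := congrArg (algebraMap R K) hz
    simp only [map_mul] at this
    field_simp
    linear_combination -this

/-- The inclusion of `I` into the principal lattice spanned by its gcd induces an isomorphism of
duals; reflexivity of `I` then forces the inclusion to be onto. -/
theorem Submodule.exists_eq_span_singleton_of_isReflexive [NormalizedGCDMonoid R]
    (I : Submodule R K) (hfg : I.FG) (hI : I ≠ ⊥) [Module.IsReflexive R I] :
    ∃ c : K, c ≠ 0 ∧ I = R ∙ c := by
  obtain ⟨c, hc, hle, hint⟩ := I.exists_le_span_singleton_isInteger_mul hfg hI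
  let coord := (LinearEquiv.toSpanNonzeroSingleton R K c hc).symm
  have : Module.IsReflexive R (R ∙ c) := Module.equiv coord.symm
  let i := Submodule.inclusion hle
  have hinj : Function.Injective i.dualMap := by
    refine (injective_iff_map_eq_zero _).mpr fun ψ hψ => ?_
    obtain ⟨a, haI, ha⟩ := Submodule.exists_mem_ne_zero_of_ne_bot hI
    have hψc : ψ (coord.symm 1) = 0 := by
      have h : ψ (coord.symm (coord (i ⟨a, haI⟩))) = 0 := by
        rw [coord.symm_apply_apply]; exact LinearMap.congr_fun hψ ⟨a, haI⟩
      rw [← mul_one (coord _), ← smul_eq_mul, map_smul, map_smul, smul_eq_mul] at h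
      refine (mul_eq_zero.mp h).resolve_left ?_
      rw [coord.map_eq_zero_iff]
      exact fun h0 => ha (congrArg Subtype.val h0)
    ext y
    rw [← coord.symm_apply_apply y, ← mul_one (coord y), ← smul_eq_mul, map_smul, map_smul, hψc]
    simp
  have hsurj : Function.Surjective i.dualMap := by
    intro φ
    obtain ⟨x, hx⟩ := I.exists_algebraMap_eq_mul_of_dual φ
    obtain ⟨r, hr⟩ := hint x fun a ha => ⟨φ ⟨a, ha⟩, hx ⟨a, ha⟩⟩
    refine ⟨r • coord.toLinearMap, LinearMap.ext fun a => IsFractionRing.injective R K ?_⟩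
    have hca : coord (i a) • c = a :=
      LinearEquiv.toSpanNonzeroSingleton_symm_apply_smul R K c hc (i a)
    simp only [LinearMap.dualMap_apply, LinearMap.smul_apply, LinearEquiv.coe_coe, smul_eq_mul]
    rw [hx, ← hca, Algebra.smul_def, map_mul, hr]
    ring
  obtain ⟨a, ha⟩ := (Module.bijective_of_bijective_dualMap ⟨hinj, hsurj⟩).2
    ⟨c, Submodule.mem_span_singleton_self c⟩
  refine ⟨c, hc, le_antisymm hle ?_⟩
  rw [Submodule.span_singleton_le_iff_mem]
  have hac : (a : K) = c := congrArg Subtype.val ha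
  exact hac ▸ a.2

end FractionField

section TwoDim

variable {K V : Type*} [Field K] [AddCommGroup V] [Module K V]

theorem LinearMap.sq_sub_trace_smul_add_det_smul_eq_zero (hdim : Module.finrank K V = 2)
    (f : Module.End K V) :
    f ^ 2 - LinearMap.trace K V f • f + LinearMap.det f • 1 = 0 := by
  have : FiniteDimensional K V := Module.finite_of_finrank_eq_succ hdim
  let b : Module.Basis (Fin 2) K V := (Module.finBasis K V).reindex (finCongr hdim)
  have h := LinearMap.aeval_self_charpoly f
  rw [← LinearMap.charpoly_toMatrix f b, Matrix.charpoly_fin_two, LinearMap.det_toMatrix,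
    ← LinearMap.trace_eq_matrix_trace] at h
  simpa [Algebra.smul_def] using h

theorem LinearMap.trace_smul_one_of_finrank_eq_two (hdim : Module.finrank K V = 2) (a : K) :
    LinearMap.trace K V (a • 1) = 2 * a := by
  have : FiniteDimensional K V := Module.finite_of_finrank_eq_succ hdim
  rw [map_smul, LinearMap.trace_one, hdim, smul_eq_mul, mul_comm]; norm_num

theorem LinearMap.apply_apply_eq_of_trace (hdim : Module.finrank K V = 2)
    (h2 : (2 : K) ≠ 0) (f : Module.End K V) {a b : K} (htr : LinearMap.trace K V f = a + b)
    (htr₂ : LinearMap.trace K V (f ^ 2) = a ^ 2 + b ^ 2) (v : V) :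
    f (f v) = (a + b) • f v - (a * b) • v := by
  have hCH := LinearMap.sq_sub_trace_smul_add_det_smul_eq_zero hdim f
  have hdet : LinearMap.det f = a * b := by
    have h := congrArg (LinearMap.trace K V) hCH
    rw [map_add, map_sub, map_smul, htr₂, htr, LinearMap.trace_smul_one_of_finrank_eq_two hdim,
      map_zero, smul_eq_mul] at h
    exact mul_left_cancel₀ h2 (by linear_combination h)
  have h := LinearMap.congr_fun hCH v
  rw [hdet, htr] at h
  simp only [LinearMap.add_apply, LinearMap.sub_apply, LinearMap.smul_apply, pow_two,
    Module.End.mul_apply, Module.End.one_apply, LinearMap.zero_apply] at h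
  rw [← sub_eq_zero, ← h]
  module

theorem LinearMap.exists_basis_apply_eq_smul (hdim : Module.finrank K V = 2)
    (f : Module.End K V) {a b : K} (hab : a ≠ b) (htr : LinearMap.trace K V f = a + b)
    (hf : ∀ v, f (f v) = (a + b) • f v - (a * b) • v) :
    ∃ e : Module.Basis (Fin 2) K V, f (e 0) = a • e 0 ∧ f (e 1) = b • e 1 := by
  have hne : ∀ c d : K, c ≠ d → LinearMap.trace K V f = c + d → ∃ v, f v - d • v ≠ 0 := by
    intro c d hcd htrc
    by_contra! h
    have hfd : f = d • 1 := LinearMap.ext fun v => sub_eq_zero.mp (h v)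
    rw [hfd, LinearMap.trace_smul_one_of_finrank_eq_two hdim] at htrc
    exact hcd (by linear_combination -htrc)
  obtain ⟨v, hv⟩ := hne a b hab htr
  obtain ⟨w, hw⟩ := hne b a hab.symm (htr.trans (add_comm a b))
  have he₀ : f (f v - b • v) = a • (f v - b • v) := by
    rw [map_sub, map_smul, hf]; module
  have he₁ : f (f w - a • w) = b • (f w - a • w) := by
    rw [map_sub, map_smul, hf]; module
  have hli : LinearIndependent K ![f v - b • v, f w - a • w] := by
    refine LinearIndependent.pair_iff.mpr fun x y hxy => ?_
    have h := congrArg (fun u => f u - b • u) hxy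
    simp only [map_add, map_smul, he₀, he₁, map_zero, smul_zero, sub_zero] at h
    have hx : x = 0 := by
      have : (x * (a - b)) • (f v - b • v) = 0 := by rw [← h]; module
      exact (mul_eq_zero.mp ((smul_eq_zero.mp this).resolve_right hv)).resolve_right
        (sub_ne_zero.mpr hab)
    subst hx
    rw [zero_smul, zero_add] at hxy
    exact ⟨rfl, (smul_eq_zero.mp hxy).resolve_right hw⟩
  refine ⟨basisOfLinearIndependentOfCardEqFinrank hli (by simp [hdim]), ?_, ?_⟩
  · simpa only [coe_basisOfLinearIndependentOfCardEqFinrank, Matrix.cons_val_zero] using he₀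
  · simpa only [coe_basisOfLinearIndependentOfCardEqFinrank, Matrix.cons_val_one,
      Matrix.cons_val_zero] using he₁

end TwoDim

section Hensel

open Polynomial

variable {R : Type*} [CommRing R] [IsLocalRing R]

theorem IsLocalRing.isUnit_two_of_ringChar_ne_two (h : ringChar (R ⧸ maximalIdeal R) ≠ 2) :
    IsUnit (2 : R) := by
  refine (residue_ne_zero_iff_isUnit _).mp ?_
  have h2 := Ring.two_ne_zero h
  rwa [← map_ofNat (Ideal.Quotient.mk (maximalIdeal R))] at h2

variable [HenselianRing R (maximalIdeal R)]

theorem HenselianRing.exists_add_eq_mul_eq {t n : R} {a a' : R ⧸ maximalIdeal R} (ha : a ≠ a')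
    (ht : Ideal.Quotient.mk _ t = a + a') (hn : Ideal.Quotient.mk _ n = a * a') :
    ∃ α β : R, α + β = t ∧ α * β = n ∧
      Ideal.Quotient.mk _ α = a ∧ Ideal.Quotient.mk _ β = a' := by
  obtain ⟨a₀, rfl⟩ := Ideal.Quotient.mk_surjective a
  have hmonic : (X ^ 2 - C t * X + C n).Monic := by monicity!
  have hder : Ideal.Quotient.mk (maximalIdeal R) ((X ^ 2 - C t * X + C n).derivative.eval a₀)
      = Ideal.Quotient.mk _ a₀ - a' := by
    simp [ht]; ring
  obtain ⟨α, hroot, hα⟩ := HenselianRing.is_henselian (I := maximalIdeal R) _ hmonic a₀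
    (by rw [← Ideal.Quotient.eq_zero_iff_mem]; simp [ht, hn]; ring)
    (((residue_ne_zero_iff_isUnit _).mp (hder ▸ sub_ne_zero.mpr ha)).map _)
  have hαa : Ideal.Quotient.mk (maximalIdeal R) α = Ideal.Quotient.mk _ a₀ :=
    Ideal.Quotient.eq.mpr hα
  refine ⟨α, t - α, by ring, ?_, hαa, ?_⟩
  · have := hroot.eq_zero
    simp only [eval_add, eval_sub, eval_mul, eval_pow, eval_C, eval_X] at this
    linear_combination -this
  · rw [map_sub, ht, hαa]; ring

theorem HenselianRing.exists_add_eq_sq_add_sq_eq (h2 : IsUnit (2 : R)) {t t₂ : R}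
    {a a' : R ⧸ maximalIdeal R} (ha : a ≠ a') (ht : Ideal.Quotient.mk _ t = a + a')
    (ht₂ : Ideal.Quotient.mk _ t₂ = a ^ 2 + a' ^ 2) :
    ∃ α β : R, α + β = t ∧ α ^ 2 + β ^ 2 = t₂ ∧ IsUnit (α - β) := by
  obtain ⟨u, hu⟩ := h2.exists_right_inv
  have hn : Ideal.Quotient.mk _ (u * (t ^ 2 - t₂)) = a * a' := by
    have h2u := congrArg (Ideal.Quotient.mk (maximalIdeal R)) hu
    rw [map_mul, map_ofNat, map_one] at h2u
    simp only [map_mul, map_sub, map_pow, ht, ht₂]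
    linear_combination (a * a') * h2u
  obtain ⟨α, β, hsum, hprod, hα, hβ⟩ := exists_add_eq_mul_eq ha ht hn
  refine ⟨α, β, hsum, ?_, ?_⟩
  · linear_combination (α + β + t) * hsum - 2 * hprod - (t ^ 2 - t₂) * hu
  · refine (residue_ne_zero_iff_isUnit _).mp ?_
    show Ideal.Quotient.mk _ (α - β) ≠ 0
    rw [map_sub, hα, hβ]
    exact sub_ne_zero.mpr ha

end Hensel

theorem Representation.exists_basis_apply_eq_smul_of_residue {R K V G : Type*} [CommRing R]
    [IsDomain R] [IsLocalRing R] [HenselianRing R (maximalIdeal R)] [Field K] [Algebra R K]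
    [IsFractionRing R K] [AddCommGroup V] [Module K V] [Module R V] [IsScalarTower R K V]
    [Monoid G] (h2 : IsUnit (2 : R)) (hdim : Module.finrank K V = 2) (ρ : Representation K G V)
    {tr : G → R} (htr : ∀ g, algebraMap R K (tr g) = LinearMap.trace K V (ρ g))
    {ψ ψ' : G →* (R ⧸ maximalIdeal R)ˣ}
    (hred : ∀ g, Ideal.Quotient.mk (maximalIdeal R) (tr g)
      = (ψ g : R ⧸ maximalIdeal R) + (ψ' g : R ⧸ maximalIdeal R))
    {g₀ : G} (hg₀ : ψ g₀ ≠ ψ' g₀) :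
    ∃ (e : Module.Basis (Fin 2) K V) (α β : R),
      IsUnit (α - β) ∧ ρ g₀ (e 0) = α • e 0 ∧ ρ g₀ (e 1) = β • e 1 := by
  obtain ⟨α, β, hsum, hsq, hαβ⟩ := HenselianRing.exists_add_eq_sq_add_sq_eq h2
    (t₂ := tr (g₀ ^ 2)) (fun h => hg₀ (Units.ext h)) (hred g₀)
    (by rw [hred, map_pow, map_pow, Units.val_pow_eq_pow_val, Units.val_pow_eq_pow_val])
  have htr₁ : LinearMap.trace K V (ρ g₀) = algebraMap R K α + algebraMap R K β := by
    rw [← htr, ← hsum, map_add]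
  have htr₂ : LinearMap.trace K V (ρ g₀ ^ 2) = algebraMap R K α ^ 2 + algebraMap R K β ^ 2 := by
    rw [← map_pow, ← htr, ← hsq, map_add, map_pow, map_pow]
  have hK2 : (2 : K) ≠ 0 := by
    rw [← map_ofNat (algebraMap R K) 2]
    exact (h2.map _).ne_zero
  obtain ⟨e, he₀, he₁⟩ := (ρ g₀).exists_basis_apply_eq_smul hdim
    ((IsFractionRing.injective R K).ne (sub_ne_zero.mp hαβ.ne_zero)) htr₁
    (LinearMap.apply_apply_eq_of_trace hdim hK2 _ htr₁ htr₂)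
  exact ⟨e, α, β, hαβ, by rw [he₀, algebraMap_smul], by rw [he₁, algebraMap_smul]⟩

section TriangularReduction

theorem MonoidHom.exists_trace_eq_add_of_apply_eq_zero {A G : Type*} [Semiring A] [Group G]
    (M : G →* Matrix (Fin 2) (Fin 2) A) {i j : Fin 2} (hij : i ≠ j) (hM : ∀ g, M g i j = 0) :
    ∃ ϑ ϑ' : G →* Aˣ, ∀ g, (M g).trace = ϑ g + ϑ' g := by
  have hdiag : ∀ k g h, M (g * h) k k = M g k k * M h k k := by
    intro k g h
    rw [map_mul, Matrix.mul_apply, Fin.sum_univ_two]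
    fin_cases i <;> fin_cases j <;> fin_cases k <;> simp_all
  let χ (k : Fin 2) : G →* A := ⟨⟨fun g => M g k k, by simp⟩, hdiag k⟩
  exact ⟨(χ 0).toHomUnits, (χ 1).toHomUnits, fun g => by simp [Matrix.trace_fin_two, χ]⟩

theorem MonoidHom.exists_trace_mk_eq_add_of_apply_mem {R G : Type*} [CommRing R] [Group G]
    (M : G →* Matrix (Fin 2) (Fin 2) R) {i j : Fin 2} (hij : i ≠ j) {I : Ideal R}
    (hM : ∀ g, M g i j ∈ I) :
    ∃ ϑ ϑ' : G →* (R ⧸ I)ˣ, ∀ g, Ideal.Quotient.mk I (M g).trace = ϑ g + ϑ' g := by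
  obtain ⟨ϑ, ϑ', h⟩ := ((Ideal.Quotient.mk I).mapMatrix.toMonoidHom.comp M)
    |>.exists_trace_eq_add_of_apply_eq_zero hij fun g => Ideal.Quotient.eq_zero_iff_mem.mpr (hM g)
  exact ⟨ϑ, ϑ', fun g => (AddMonoidHom.map_trace (Ideal.Quotient.mk I) (M g)).trans (h g)⟩

end TriangularReduction

section Lattice

variable {R K V : Type*} [CommRing R] [Field K] [Algebra R K] [AddCommGroup V] [Module K V]
  [Module R V] [IsScalarTower R K V]

theorem Module.Basis.repr_unitsSMul_smul {ι : Type*} (e : Module.Basis ι K V) (w : ι → Kˣ)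
    (v : V) (i : ι) : (e.unitsSMul w).repr v i • e.unitsSMul w i = e.repr v i • e i := by
  simp only [Module.Basis.repr_unitsSMul, Module.Basis.unitsSMul_apply, Units.smul_def,
    Units.val_inv_eq_inv_val, smul_eq_mul, smul_smul]
  rw [mul_right_comm, inv_mul_cancel₀ (w i).ne_zero, one_mul]

theorem LinearMap.toMatrix_unitsSMul_apply {ι : Type*} [Fintype ι] [DecidableEq ι]
    (b : Module.Basis ι K V) (w : ι → Kˣ) (f : V →ₗ[K] V) (i j : ι) :
    LinearMap.toMatrix (b.unitsSMul w) (b.unitsSMul w) f i j =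
      (w i : K)⁻¹ * w j * LinearMap.toMatrix b b f i j := by
  simp [LinearMap.toMatrix_apply, Module.Basis.unitsSMul_apply, Module.Basis.repr_unitsSMul,
    Units.smul_def]
  ring

/-- The eigenprojections `(f - β) / (α - β)` and `(α - f) / (α - β)` have coefficients in `R`. -/
theorem Module.Basis.repr_smul_mem_of_apply_eq_smul (e : Module.Basis (Fin 2) K V)
    (f : V →ₗ[K] V) {α β : R} (hαβ : IsUnit (α - β)) (he₀ : f (e 0) = α • e 0)
    (he₁ : f (e 1) = β • e 1) {S : Submodule R V} (hS : ∀ v ∈ S, f v ∈ S) {v : V} (hv : v ∈ S)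
    (i : Fin 2) : e.repr v i • e i ∈ S := by
  obtain ⟨u, hu⟩ := hαβ.exists_right_inv
  have hu' : (algebraMap R K α - algebraMap R K β) * algebraMap R K u = 1 := by
    rw [← map_sub, ← map_mul, hu, map_one]
  have hv' : v = e.repr v 0 • e 0 + e.repr v 1 • e 1 := by
    rw [← Fin.sum_univ_two (fun i => e.repr v i • e i), e.sum_repr]
  set x := e.repr v 0
  set y := e.repr v 1
  have hfv : f v = x • algebraMap R K α • e 0 + y • algebraMap R K β • e 1 := by
    conv_lhs => rw [hv']
    simp only [map_add, map_smul, he₀, he₁, algebraMap_smul]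
  fin_cases i
  · have h : x • e 0 = u • (f v - β • v) := by
      rw [← algebraMap_smul K u, ← algebraMap_smul K β, hfv]
      conv_rhs => rw [hv']
      linear_combination (norm := module) -hu' • (x • e 0)
    show x • e 0 ∈ S
    exact h ▸ S.smul_mem u (S.sub_mem (hS v hv) (S.smul_mem β hv))
  · have h : y • e 1 = u • (α • v - f v) := by
      rw [← algebraMap_smul K u, ← algebraMap_smul K α, hfv]
      conv_rhs => rw [hv']
      linear_combination (norm := module) -hu' • (y • e 1)
    show y • e 1 ∈ S
    exact h ▸ S.smul_mem u (S.sub_mem (S.smul_mem α hv) (hS v hv))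

variable [IsFractionRing R K]

theorem homothetic_span_range_unitsSMul {ι : Type*} (b : Module.Basis ι K V) (w : ι → Kˣ)
    (hw : ∀ i j, IsInteger R ((w i : K)⁻¹ * w j)) (i₀ : ι) :
    Homothetic R K (Submodule.span R (Set.range b))
      (Submodule.span R (Set.range (b.unitsSMul w))) := by
  refine ⟨w i₀, (w i₀).ne_zero, ?_⟩
  rw [latSmul, Submodule.map_span, ← Set.range_comp]
  refine Submodule.span_range_eq_of_forall_exists_unit_smul fun i => ?_
  obtain ⟨u, hu⟩ := IsFractionRing.exists_unit_eq_of_isInteger (by simp) (hw i i₀)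
    (by simpa [mul_comm] using hw i₀ i)
  refine ⟨u, ?_⟩
  rw [Units.smul_def, ← algebraMap_smul K, hu, Module.Basis.unitsSMul_apply, Units.smul_def,
    smul_smul, mul_right_comm, inv_mul_cancel₀ (w i).ne_zero, one_mul]
  rfl

variable [IsDomain R]

theorem Module.Basis.isInteger_toMatrix_of_mapsTo {ι : Type*} [Fintype ι] [DecidableEq ι]
    (b : Module.Basis ι K V) {f : V →ₗ[K] V}
    (hf : ∀ v ∈ Submodule.span R (Set.range b), f v ∈ Submodule.span R (Set.range b))
    (i j : ι) : IsInteger R (LinearMap.toMatrix b b f i j) := by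
  rw [LinearMap.toMatrix_apply]
  exact (b.mem_span_iff_repr_mem R _).mp (hf _ (Submodule.subset_span ⟨j, rfl⟩)) i

theorem Representation.exists_monoidHom_map_eq_toMatrix {G ι : Type*} [Monoid G] [Fintype ι]
    [DecidableEq ι] (ρ : Representation K G V) (b : Module.Basis ι K V)
    (hρ : ∀ g, ∀ v ∈ Submodule.span R (Set.range b), ρ g v ∈ Submodule.span R (Set.range b)) :
    ∃ M : G →* Matrix ι ι R, ∀ g, (M g).map (algebraMap R K) = LinearMap.toMatrix b b (ρ g) := by
  choose M hM using fun g => b.isInteger_toMatrix_of_mapsTo (hρ g)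
  have hinj : Function.Injective fun A : Matrix ι ι R => A.map (algebraMap R K) :=
    Matrix.map_injective (IsFractionRing.injective R K)
  have hMap : ∀ g, (Matrix.of (M g)).map (algebraMap R K) = LinearMap.toMatrix b b (ρ g) :=
    fun g => Matrix.ext (hM g)
  refine ⟨⟨⟨fun g => Matrix.of (M g), hinj ?_⟩, fun g h => hinj ?_⟩, hMap⟩
  · simp only [hMap, map_one, LinearMap.toMatrix_one]
    exact (Matrix.map_one _ (map_zero _) (map_one _)).symm
  · simp only [hMap, map_mul, LinearMap.toMatrix_mul]
    rw [Matrix.map_mul, hMap, hMap]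

theorem Submodule.exists_eq_span_range_unitsSMul [NormalizedGCDMonoid R] {ι : Type*} [Fintype ι]
    (e : Module.Basis ι K V) (S : Submodule R V) (hfg : S.FG) [Module.IsReflexive R S]
    (hspan : Submodule.span K (S : Set V) = ⊤) (hS : ∀ v ∈ S, ∀ i, e.repr v i • e i ∈ S) :
    ∃ d : ι → Kˣ, S = Submodule.span R (Set.range (e.unitsSMul d)) := by
  have key : ∀ i, ∃ c : K, c ≠ 0 ∧ S.map ((e.coord i).restrictScalars R) = R ∙ c := by
    intro i
    set A := S.map ((e.coord i).restrictScalars R)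
    have hA : ∀ a ∈ A, a • e i ∈ S := by
      rintro _ ⟨v, hv, rfl⟩
      exact hS v hv i
    let incl : A →ₗ[R] S := LinearMap.codRestrict S
      (((LinearMap.toSpanSingleton K V (e i)).restrictScalars R).comp A.subtype)
      fun a => hA a a.2
    have : Module.IsReflexive R A :=
      .of_split incl (((e.coord i).restrictScalars R).submoduleMap S)
        (LinearMap.ext fun a => Subtype.ext (show e.coord i ((a : K) • e i) = a by simp))
    refine A.exists_eq_span_singleton_of_isReflexive (hfg.map _) fun hA0 => ?_
    have hker : Submodule.span K (S : Set V) ≤ LinearMap.ker (e.coord i) :=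
      Submodule.span_le.mpr fun v hv => by
        have h : e.coord i v ∈ A := Submodule.mem_map_of_mem hv
        rwa [hA0, Submodule.mem_bot] at h
    rw [hspan] at hker
    simpa using hker (Submodule.mem_top (x := e i))
  choose d hd hA using key
  refine ⟨fun i => Units.mk0 (d i) (hd i), le_antisymm (fun v hv => ?_) ?_⟩
  · rw [← e.sum_repr v]
    refine Submodule.sum_mem _ fun i _ => ?_
    obtain ⟨r, hr⟩ := Submodule.mem_span_singleton.mp
      (hA i ▸ Submodule.mem_map_of_mem (f := (e.coord i).restrictScalars R) hv)
    rw [show e.repr v i = r • d i from hr.symm, smul_assoc]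
    exact Submodule.smul_mem _ r
      (Submodule.subset_span ⟨i, by simp [Module.Basis.unitsSMul_apply]⟩)
  · refine Submodule.span_le.mpr (Set.range_subset_iff.mpr fun i => ?_)
    obtain ⟨v, hv, hvd⟩ := (hA i).symm ▸ Submodule.mem_span_singleton_self (d i)
    simpa [Module.Basis.unitsSMul_apply, ← hvd] using hS v hv i

theorem Representation.homothetic_or_exists_trace_mk_eq_add [UniqueFactorizationMonoid R]
    {G : Type*} [Group G] (ρ : Representation K G V) {tr : G → R}
    (htr : ∀ g, algebraMap R K (tr g) = LinearMap.trace K V (ρ g))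
    (b : Module.Basis (Fin 2) K V) (w : Fin 2 → Kˣ)
    (hT : ∀ g, ∀ v ∈ Submodule.span R (Set.range b), ρ g v ∈ Submodule.span R (Set.range b))
    (hT' : ∀ g, ∀ v ∈ Submodule.span R (Set.range (b.unitsSMul w)),
      ρ g v ∈ Submodule.span R (Set.range (b.unitsSMul w))) :
    Homothetic R K (Submodule.span R (Set.range b))
        (Submodule.span R (Set.range (b.unitsSMul w))) ∨
      ∃ p : R, Prime p ∧ ∃ ϑ ϑ' : G →* (R ⧸ Ideal.span {p})ˣ,
        ∀ g, Ideal.Quotient.mk _ (tr g) =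
          (ϑ g : R ⧸ Ideal.span {p}) + (ϑ' g : R ⧸ Ideal.span {p}) := by
  by_cases hw : ∀ i j, IsInteger R ((w i : K)⁻¹ * w j)
  · exact .inl (homothetic_span_range_unitsSMul b w hw 0)
  push Not at hw
  obtain ⟨i, j, hij⟩ := hw
  have hne : i ≠ j := by
    rintro rfl
    rw [inv_mul_cancel₀ (w i).ne_zero] at hij
    exact hij isInteger_one
  obtain ⟨p, hp, hdvd⟩ := IsFractionRing.exists_prime_dvd_of_not_isInteger hij
  obtain ⟨M, hM⟩ := ρ.exists_monoidHom_map_eq_toMatrix b hT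
  have hpM : ∀ g, M g i j ∈ Ideal.span {p} := fun g => by
    refine Ideal.mem_span_singleton.mpr (hdvd _ ?_)
    have h := (b.unitsSMul w).isInteger_toMatrix_of_mapsTo (hT' g) i j
    rwa [LinearMap.toMatrix_unitsSMul_apply, ← hM, Matrix.map_apply] at h
  obtain ⟨ϑ, ϑ', h⟩ := M.exists_trace_mk_eq_add_of_apply_mem hne hpM
  refine .inr ⟨p, hp, ϑ, ϑ', fun g => ?_⟩
  have htrM : tr g = (M g).trace := by
    refine IsFractionRing.injective R K ?_
    rw [htr, LinearMap.trace_eq_matrix_trace K b, ← hM]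
    exact (AddMonoidHom.map_trace _ _).symm
  rw [htrM, h]

end Lattice

theorem isHeightOnePrime_span_singleton {R : Type*} [CommRing R] [IsDomain R]
    [UniqueFactorizationMonoid R] {p : R} (hp : Prime p) : IsHeightOnePrime (Ideal.span {p}) := by
  refine ⟨(Ideal.span_singleton_prime hp.ne_zero).mpr hp,
    by simpa [Ideal.span_singleton_eq_bot] using hp.ne_zero, fun q hq hlt => ?_⟩
  by_contra hq0
  obtain ⟨x, hxq, hx⟩ := hq.exists_mem_prime_of_ne_bot hq0
  obtain ⟨u, rfl⟩ := Ideal.mem_span_singleton'.mp (hlt.le hxq)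
  have hu : IsUnit u := (hx.irreducible.isUnit_or_isUnit rfl).resolve_right hp.not_isUnit
  exact hlt.not_ge
    ((Ideal.span_singleton_le_iff_mem q).mpr ((Ideal.unit_mul_mem_iff_mem q hu).mp hxq))

theorem stable_lattices_homothetic_of_N_empty_general
    {R K V G : Type*} [CommRing R] [IsDomain R] [IsLocalRing R]
    [UniqueFactorizationMonoid R] [IsAdicComplete (maximalIdeal R) R]
    [Field K] [Algebra R K] [IsFractionRing R K]
    [AddCommGroup V] [Module K V] [Module R V] [IsScalarTower R K V] [Group G]
    (hchar : ringChar (R ⧸ maximalIdeal R) ≠ 2)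
    (hdim : Module.finrank K V = 2)
    (ρ : Representation K G V)
    (tr : G → R) (htr : ∀ g, algebraMap R K (tr g) = LinearMap.trace K V (ρ g))
    (ψ ψ' : G →* (R ⧸ maximalIdeal R)ˣ) (hdist : ψ ≠ ψ')
    (hred : ∀ g, Ideal.Quotient.mk (maximalIdeal R) (tr g)
      = (ψ g : R ⧸ maximalIdeal R) + (ψ' g : R ⧸ maximalIdeal R))
    (J : Ideal R)
    (hJ : ∀ I : Ideal R, J ≤ I ↔ ∃ ϑ ϑ' : G →* (R ⧸ I)ˣ,
      ∀ g, Ideal.Quotient.mk I (tr g) = (ϑ g : R ⧸ I) + (ϑ' g : R ⧸ I))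
    (hNempty : ∀ q : Ideal R, IsHeightOnePrime q → ¬ J ≤ q) :
    ∀ T T' : Submodule R V,
      T.FG → Submodule.span K (T : Set V) = ⊤ → (∀ g : G, ∀ v ∈ T, ρ g v ∈ T) →
      Function.Bijective (Module.Dual.eval R T) →
      T'.FG → Submodule.span K (T' : Set V) = ⊤ → (∀ g : G, ∀ v ∈ T', ρ g v ∈ T') →
      Function.Bijective (Module.Dual.eval R T') →
      Homothetic R K T T' := by
  intro T T' hTfg hTspan hTstab hTrefl hT'fg hT'span hT'stab hT'refl
  have : Module.IsReflexive R T := ⟨hTrefl⟩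
  have : Module.IsReflexive R T' := ⟨hT'refl⟩
  let _ := UniqueFactorizationMonoid.strongNormalizationMonoid (α := R)
  let _ := UniqueFactorizationMonoid.toNormalizedGCDMonoid R
  obtain ⟨g₀, hg₀⟩ := DFunLike.ne_iff.mp hdist
  obtain ⟨e, α, β, hαβ, he₀, he₁⟩ := ρ.exists_basis_apply_eq_smul_of_residue
    (IsLocalRing.isUnit_two_of_ringChar_ne_two hchar) hdim htr hred hg₀
  have hproj (S : Submodule R V) (hS : ∀ g, ∀ v ∈ S, ρ g v ∈ S) :
      ∀ v ∈ S, ∀ i, e.repr v i • e i ∈ S := fun v hv =>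
    e.repr_smul_mem_of_apply_eq_smul (ρ g₀) hαβ he₀ he₁ (hS g₀) hv
  obtain ⟨d, rfl⟩ := Submodule.exists_eq_span_range_unitsSMul e T hTfg hTspan (hproj T hTstab)
  -- the eigenprojections do not see the rescaling of the eigenbasis
  obtain ⟨w, rfl⟩ := Submodule.exists_eq_span_range_unitsSMul (e.unitsSMul d) T' hT'fg hT'span
    (by simpa only [Module.Basis.repr_unitsSMul_smul] using hproj T' hT'stab)
  refine (ρ.homothetic_or_exists_trace_mk_eq_add htr _ w hTstab hT'stab).resolve_right ?_
  rintro ⟨p, hp, hχ⟩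
  exact hNempty _ (isHeightOnePrime_span_singleton hp) ((hJ _).mpr hχ)

/-- Let `R` be a complete local UFD of residue characteristic `≠ 2` and
`ρ` a two-dimensional irreducible, residually disjoint reducible representation with a
stable free lattice, with ideal of reducibility `J`. If the set `N` of height-one primes
at which `J` is locally proper is empty (i.e. `J` is contained in no height-one prime),
then any two `G`-stable reflexive lattices of `V` are homothetic. -/
theorem stable_lattices_homothetic_of_N_empty
    {R K V G : Type*} [CommRing R] [IsDomain R] [IsLocalRing R]
    [UniqueFactorizationMonoid R] [IsAdicComplete (maximalIdeal R) R]
    [Field K] [Algebra R K] [IsFractionRing R K]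
    [AddCommGroup V] [Module K V] [Module R V] [IsScalarTower R K V] [Group G]
    (hchar : ringChar (R ⧸ maximalIdeal R) ≠ 2)
    (hdim : Module.finrank K V = 2)
    (ρ : Representation K G V)
    (hirr : ∀ W : Submodule K V, (∀ g : G, ∀ v ∈ W, ρ g v ∈ W) → W = ⊥ ∨ W = ⊤)
    (T₀ : Submodule R V) (hT₀fg : T₀.FG) (hT₀span : Submodule.span K (T₀ : Set V) = ⊤)
    (hT₀stab : ∀ g : G, ∀ v ∈ T₀, ρ g v ∈ T₀) (hT₀free : Module.Free R T₀)
    (tr : G → R) (htr : ∀ g, algebraMap R K (tr g) = LinearMap.trace K V (ρ g))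
    (ψ ψ' : G →* (R ⧸ maximalIdeal R)ˣ) (hdist : ψ ≠ ψ')
    (hred : ∀ g, Ideal.Quotient.mk (maximalIdeal R) (tr g)
      = (ψ g : R ⧸ maximalIdeal R) + (ψ' g : R ⧸ maximalIdeal R))
    (J : Ideal R)
    (hJ : ∀ I : Ideal R, J ≤ I ↔ ∃ ϑ ϑ' : G →* (R ⧸ I)ˣ,
      ∀ g, Ideal.Quotient.mk I (tr g) = (ϑ g : R ⧸ I) + (ϑ' g : R ⧸ I))
    (hNempty : ∀ q : Ideal R, IsHeightOnePrime q → ¬ J ≤ q) :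
    ∀ T T' : Submodule R V,
      T.FG → Submodule.span K (T : Set V) = ⊤ → (∀ g : G, ∀ v ∈ T, ρ g v ∈ T) →
      Function.Bijective (Module.Dual.eval R T) →
      T'.FG → Submodule.span K (T' : Set V) = ⊤ → (∀ g : G, ∀ v ∈ T', ρ g v ∈ T') →
      Function.Bijective (Module.Dual.eval R T') →
      Homothetic R K T T' :=
  stable_lattices_homothetic_of_N_empty_general hchar hdim ρ tr htr ψ ψ' hdist hred J hJ hNempty
end
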